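/- Fix ε ∈ ℂ with ε ≠ 0 and set (B₁,B₂) = v_ε = ( !![0,ε; 0,0], !![0,ε; 0,0] ). Then the subset of M₂(ℂ) × M₂(ℂ) given by { ( w·B₁ − T·X₂ᵀ·T·B₁ − B₁·X₁ , X₂·B₂ − B₂·X₁ ) : X₁, X₂ ∈ M₂(ℂ), trace X₁ = 0, w ∈ ℂ } (the tangent space at v_ε to the H-orbit of v_ε, i.e. the image of the Lie algebra of H under the differentiated action) equals the four-dimensional subspace { ( !![a,b; 0,c], !![a,d; 0,−c] ) : a,b,c,d ∈ ℂ }. Moreover, every pair (C₁,C₂) in this subspace satisfies Tr( !![1,0; 1,1]ᵀ · C₁ ) + Tr( !![−1,0; 0,1]ᵀ · C₂ ) = 0, i.e. the covector ξ = ( !![1,0; 1,1], !![−1,0; 0,1] ) annihilates this tangent space. -/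

import Mathlib

/-! Multiplying by `!![0, ε; 0, 0]` only moves a row or column of the other factor, so the
tangent vector of `(X₁, X₂, w)` has the entries `-ε (X₁)₁₀`, `ε (w - (X₂)₁₁ - (X₁)₁₁)`,
`-ε (X₂)₁₀` and `ε ((X₂)₀₀ - (X₁)₁₁)`; as `ε ≠ 0`, these four coordinates take all values
independently, even with `X₁` traceless. -/

open Matrix

/-- The matrix `T = !![0,1; 1,0]`. -/
def MT : Matrix (Fin 2) (Fin 2) ℂ := !![0, 1; 1, 0]

section

variable {R : Type*} [NonUnitalNonAssocSemiring R]

theorem mul_upperRightCorner (X : Matrix (Fin 2) (Fin 2) R) (ε : R) :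
    X * !![0, ε; 0, 0] = !![0, X 0 0 * ε; 0, X 1 0 * ε] := by
  rw [eta_fin_two X, mul_fin_two]
  simp

theorem upperRightCorner_mul (X : Matrix (Fin 2) (Fin 2) R) (ε : R) :
    !![0, ε; 0, 0] * X = !![ε * X 1 0, ε * X 1 1; 0, 0] := by
  rw [eta_fin_two X, mul_fin_two]
  simp

end

theorem MT_mul_transpose_mul_MT (X : Matrix (Fin 2) (Fin 2) ℂ) :
    MT * Xᵀ * MT = !![X 1 1, X 0 1; X 1 0, X 0 0] := by
  ext i j
  fin_cases i <;> fin_cases j <;> simp [MT, mul_apply, vecMul, Fin.sum_univ_two] <;> rfl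

theorem orbitTangent_eq (ε w : ℂ) (X₁ X₂ : Matrix (Fin 2) (Fin 2) ℂ) :
    (w • (!![0, ε; 0, 0] : Matrix (Fin 2) (Fin 2) ℂ)
        - MT * X₂ᵀ * MT * !![0, ε; 0, 0] - !![0, ε; 0, 0] * X₁,
      X₂ * !![0, ε; 0, 0] - !![0, ε; 0, 0] * X₁) =
      (!![-(ε * X₁ 1 0), ε * (w - X₂ 1 1 - X₁ 1 1); 0, -(ε * X₂ 1 0)],
        !![-(ε * X₁ 1 0), ε * (X₂ 0 0 - X₁ 1 1); 0, ε * X₂ 1 0]) := by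
  rw [MT_mul_transpose_mul_MT, mul_upperRightCorner, mul_upperRightCorner,
    upperRightCorner_mul]
  ext i j <;> fin_cases i <;> fin_cases j <;> simp <;> ring

theorem stmt6 (ε : ℂ) (hε : ε ≠ 0) :
    ({p : Matrix (Fin 2) (Fin 2) ℂ × Matrix (Fin 2) (Fin 2) ℂ |
        ∃ (X₁ X₂ : Matrix (Fin 2) (Fin 2) ℂ) (w : ℂ), X₁.trace = 0 ∧
          p = (w • (!![0, ε; 0, 0] : Matrix (Fin 2) (Fin 2) ℂ)
                - MT * X₂ᵀ * MT * !![0, ε; 0, 0]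
                - !![0, ε; 0, 0] * X₁,
              X₂ * !![0, ε; 0, 0] - !![0, ε; 0, 0] * X₁)} =
      {p : Matrix (Fin 2) (Fin 2) ℂ × Matrix (Fin 2) (Fin 2) ℂ |
        ∃ a b c d : ℂ, p = (!![a, b; 0, c], !![a, d; 0, -c])}) ∧
    (∀ C₁ C₂ : Matrix (Fin 2) (Fin 2) ℂ,
      (∃ a b c d : ℂ, (C₁, C₂) = (!![a, b; 0, c], !![a, d; 0, -c])) →
        ((!![1, 0; 1, 1] : Matrix (Fin 2) (Fin 2) ℂ)ᵀ * C₁).trace +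
          ((!![-1, 0; 0, 1] : Matrix (Fin 2) (Fin 2) ℂ)ᵀ * C₂).trace = 0) := by
  refine ⟨Set.ext fun p => ⟨?_, ?_⟩, ?_⟩
  · rintro ⟨X₁, X₂, w, -, rfl⟩
    rw [orbitTangent_eq]
    exact ⟨_, _, -(ε * X₂ 1 0), _, by rw [neg_neg]⟩
  · rintro ⟨a, b, c, d, rfl⟩
    refine ⟨!![0, 0; -a / ε, 0], !![d / ε, 0; -c / ε, 0], b / ε, by simp [trace_fin_two], ?_⟩
    rw [orbitTangent_eq]
    simp [mul_div_cancel₀ _ hε]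
  · rintro C₁ C₂ ⟨a, b, c, d, h⟩
    obtain ⟨rfl, rfl⟩ := Prod.mk.inj h
    simp [trace_fin_two, mul_apply, Fin.sum_univ_two]
    ring
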